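/- Let A ∈ ℝ^{d×d} be essentially non-negative and irreducible with Perron projection Π = u vᵀ. Then (1/t) ∫₀ᵗ e^{−s(A)u} e^{uA} du → Π as t → ∞. -/

import Mathlib

open scoped Matrix
open scoped Matrix.Norms.L2Operator

def Matrix.EssNonneg {d : ℕ} (A : Matrix (Fin d) (Fin d) ℝ) : Prop :=
  ∀ i j, i ≠ j → 0 ≤ A i j

def Matrix.Reducible {d : ℕ} (A : Matrix (Fin d) (Fin d) ℝ) : Prop :=
  ∃ (σ : Equiv.Perm (Fin d)) (r : ℕ), 1 ≤ r ∧ r ≤ d - 1 ∧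
    ∀ i j : Fin d, r ≤ (i : ℕ) → (j : ℕ) < r → A (σ i) (σ j) = 0

def Matrix.Irred {d : ℕ} (A : Matrix (Fin d) (Fin d) ℝ) : Prop := ¬ A.Reducible

noncomputable def Matrix.sMax {d : ℕ} (A : Matrix (Fin d) (Fin d) ℝ) : ℝ :=
  sSup (Complex.re '' spectrum ℂ (A.map Complex.ofReal))

/-!
Put `B = A - s(A) • 1`, so that the integrand is `e^{rB}`, `B u = 0` and `vᵀ B = 0`.
Perron–Frobenius uniqueness gives `ker B = ℝ u`: for `x ∈ ker B`, the vector
`y = x - (minᵢ xᵢ / uᵢ) u ≥ 0` vanishes somewhere, and its zero set is closed under the edges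
of `A`, so `y = 0` by irreducibility. Therefore `B + Π` is invertible and `C = (B + Π)⁻¹`
satisfies `B C = 1 - Π`, which gives `e^{rB} = Π + e^{rB} B C` and
`∫₀ᵗ e^{rB} dr = t Π + (e^{tB} - 1) C`. Finally `e^{tB}` is bounded for `t ≥ 0`: it is
entrywise nonnegative and fixes the positive vector `u`, so `0 ≤ (e^{tB})ᵢⱼ ≤ uᵢ / uⱼ`.
-/

open Filter Topology NormedSpace

section BanachAlgebra

variable {𝔸 : Type*} [NormedRing 𝔸] [NormedAlgebra ℝ 𝔸] [CompleteSpace 𝔸]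

theorem NormedSpace.exp_mul_of_mul_eq_zero {a b : 𝔸} (h : a * b = 0) : exp a * b = b := by
  have hterm : ∀ n ≠ 0, ((n.factorial : ℝ)⁻¹ • a ^ n) * b = 0 := fun n hn => by
    rw [smul_mul_assoc, ← Nat.succ_pred_eq_of_ne_zero hn, pow_succ, mul_assoc, h, mul_zero,
      smul_zero]
  refine ((exp_series_hasSum_exp' (𝕂 := ℝ) a).mul_right b).unique ?_
  simpa using hasSum_single 0 hterm

theorem NormedSpace.exp_smul_add_smul_one (a : 𝔸) (t c : ℝ) :
    exp (t • (a + c • 1)) = Real.exp (t * c) • exp (t • a) := by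
  let _ : NormedAlgebra ℚ 𝔸 := NormedAlgebra.restrictScalars ℚ ℝ 𝔸
  have hsplit : t • (a + c • (1 : 𝔸)) = t • a + algebraMap ℝ 𝔸 (t * c) := by
    rw [Algebra.algebraMap_eq_smul_one, smul_add, smul_smul]
  rw [hsplit, exp_add_of_commute (Algebra.commutes _ _).symm, ← algebraMap_exp_comm,
    ← Real.exp_eq_exp_ℝ, Algebra.algebraMap_eq_smul_one, mul_smul_one]

theorem NormedSpace.tendsto_cesaro_exp_smul {b p c : 𝔸} (hbp : b * p = 0) (hbc : b * c = 1 - p)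
    (hbdd : IsBoundedUnder (· ≤ ·) atTop fun t : ℝ => ‖exp (t • b)‖) :
    Tendsto (fun t : ℝ => (1 / t) • ∫ r in (0 : ℝ)..t, exp (r • b)) atTop (𝓝 p) := by
  have hderiv : ∀ r : ℝ, HasDerivAt (fun r : ℝ => exp (r • b) * c) (exp (r • b) * b * c) r :=
    fun r => (hasDerivAt_exp_smul_const b r).mul_const c
  have hcont : Continuous fun r : ℝ => exp (r • b) * b * c :=
    ((continuous_iff_continuousAt.2 fun r => (hasDerivAt_exp_smul_const b r).continuousAt).mul
      continuous_const).mul continuous_const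
  -- `p` is fixed by the semigroup, and `b c` is the complementary projection `1 - p`
  have hdecomp : ∀ r : ℝ, exp (r • b) = p + exp (r • b) * b * c := fun r => by
    rw [mul_assoc, hbc, mul_sub, mul_one,
      exp_mul_of_mul_eq_zero (by rw [smul_mul_assoc, hbp, smul_zero]), add_sub_cancel]
  have hintegral : ∀ t : ℝ, ∫ r in (0 : ℝ)..t, exp (r • b) = t • p + (exp (t • b) * c - c) := by
    intro t
    rw [intervalIntegral.integral_congr fun r _ => hdecomp r, intervalIntegral.integral_add
      intervalIntegrable_const (hcont.intervalIntegrable 0 t), intervalIntegral.integral_const,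
      intervalIntegral.integral_eq_sub_of_hasDerivAt (fun r _ => hderiv r)
      (hcont.intervalIntegrable 0 t)]
    simp
  obtain ⟨K, hK⟩ := hbdd
  have hrem : Tendsto (fun t : ℝ => (1 / t) • (exp (t • b) * c - c)) atTop (𝓝 0) := by
    refine (tendsto_const_nhds.div_atTop tendsto_id).zero_smul_isBoundedUnder_le
      ⟨K * ‖c‖ + ‖c‖, ?_⟩
    refine eventually_map.2 ?_
    filter_upwards [eventually_map.1 hK] with t ht
    calc ‖exp (t • b) * c - c‖ ≤ ‖exp (t • b)‖ * ‖c‖ + ‖c‖ :=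
          (norm_sub_le _ _).trans (add_le_add_left (norm_mul_le _ _) _)
      _ ≤ K * ‖c‖ + ‖c‖ := by gcongr
  have hlim : Tendsto (fun t : ℝ => p + (1 / t) • (exp (t • b) * c - c)) atTop (𝓝 p) := by
    simpa using hrem.const_add p
  refine hlim.congr' ?_
  filter_upwards [eventually_ne_atTop 0] with t ht
  rw [hintegral, smul_add, smul_smul, one_div_mul_cancel ht, one_smul]

end BanachAlgebra

namespace Matrix

section Fintype

variable {m n : Type*} [Fintype m] [Fintype n] [DecidableEq n]

theorem exp_apply_nonneg {M : Matrix n n ℝ} (hM : ∀ i j, 0 ≤ M i j) (i j : n) :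
    0 ≤ exp M i j := by
  have hsum := Pi.hasSum.1 (Pi.hasSum.1 (exp_series_hasSum_exp' (𝕂 := ℝ) M) i) j
  exact hsum.nonneg fun k => mul_nonneg (by positivity) (pow_apply_nonneg hM k i j)

theorem exp_mulVec_of_mulVec_eq_zero {M : Matrix n n ℝ} {x : n → ℝ} (h : M *ᵥ x = 0) :
    exp M *ᵥ x = x := by
  have hterm : ∀ k ≠ 0, ((k.factorial : ℝ)⁻¹ • M ^ k) *ᵥ x = 0 := fun k hk => by
    rw [smul_mulVec, ← Nat.succ_pred_eq_of_ne_zero hk, pow_succ, ← mulVec_mulVec, h,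
      mulVec_zero, smul_zero]
  have hsum : HasSum (fun k => ((k.factorial : ℝ)⁻¹ • M ^ k) *ᵥ x) (exp M *ᵥ x) :=
    (exp_series_hasSum_exp' (𝕂 := ℝ) M).map (mulVec.addMonoidHomLeft x)
      (continuous_id.matrix_mulVec continuous_const)
  exact hsum.unique (by simpa using hasSum_single 0 hterm)

theorem isBoundedUnder_norm_of_forall_apply_mem_Icc {ι : Type*} {l : Filter ι}
    {f : ι → Matrix m n ℝ} (lo hi : m → n → ℝ)
    (h : ∀ᶠ x in l, ∀ i j, f x i j ∈ Set.Icc (lo i j) (hi i j)) :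
    IsBoundedUnder (· ≤ ·) l fun x => ‖f x‖ := by
  -- the operator norm induces the product topology, in which this box is compact
  have hK : IsCompact (X := Matrix m n ℝ)
      (Set.univ.pi fun i => Set.univ.pi fun j => Set.Icc (lo i j) (hi i j)) :=
    isCompact_univ_pi fun _ => isCompact_univ_pi fun _ => isCompact_Icc
  obtain ⟨C, hC⟩ := hK.isBounded.exists_norm_le
  refine ⟨C, eventually_map.2 ?_⟩
  filter_upwards [h] with x hx
  exact hC _ (Set.mem_univ_pi.2 fun i => Set.mem_univ_pi.2 (hx i))

end Fintype

section Field

variable {n K : Type*} [Fintype n] [DecidableEq n] [Field K] {B : Matrix n n K} {u v : n → K}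

theorem isUnit_add_vecMulVec (hvB : v ᵥ* B = 0) (huv : u ⬝ᵥ v = 1)
    (hker : ∀ x, B *ᵥ x = 0 → ∃ α : K, x = α • u) : IsUnit (B + vecMulVec u v) := by
  rw [← mulVec_injective_iff_isUnit, ← coe_mulVecLin, ← LinearMap.ker_eq_bot,
    LinearMap.ker_eq_bot']
  intro x hx
  rw [mulVecLin_apply, add_mulVec, vecMulVec_mulVec, op_smul_eq_smul] at hx
  have hvx : v ⬝ᵥ x = 0 := by
    simpa [dotProduct_add, dotProduct_mulVec, hvB, dotProduct_comm v u, huv] using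
      congrArg (v ⬝ᵥ ·) hx
  obtain ⟨α, rfl⟩ := hker x (by simpa [hvx] using hx)
  rw [dotProduct_smul, dotProduct_comm, huv, smul_eq_mul, mul_one] at hvx
  rw [hvx, zero_smul]

theorem mul_inv_add_vecMulVec (hvB : v ᵥ* B = 0) (huv : u ⬝ᵥ v = 1)
    (hunit : IsUnit (B + vecMulVec u v)) :
    B * (B + vecMulVec u v)⁻¹ = 1 - vecMulVec u v := by
  set P := vecMulVec u v
  have hdet := (isUnit_iff_isUnit_det _).1 hunit
  have hP : P * (B + P) = P := by
    rw [mul_add, vecMulVec_mul, hvB, vecMulVec_mul_vecMulVec, dotProduct_comm, huv, one_smul]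
    simp [P]
  have hPinv : P * (B + P)⁻¹ = P :=
    calc P * (B + P)⁻¹ = P * (B + P) * (B + P)⁻¹ := by rw [hP]
      _ = P := mul_nonsing_inv_cancel_right _ _ hdet
  calc B * (B + P)⁻¹ = (B + P) * (B + P)⁻¹ - P * (B + P)⁻¹ := by
        rw [add_mul, add_sub_cancel_right]
    _ = 1 - P := by rw [mul_nonsing_inv _ hdet, hPinv]

end Field

end Matrix

namespace Matrix

variable {d : ℕ} {A : Matrix (Fin d) (Fin d) ℝ}

theorem EssNonneg.sub_smul_one (hA : A.EssNonneg) (s : ℝ) : (A - s • 1).EssNonneg := fun i j hij => by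
  simpa [one_apply_ne hij] using hA i j hij

theorem EssNonneg.exp_smul_apply_nonneg (hA : A.EssNonneg) {t : ℝ} (ht : 0 ≤ t) (i j : Fin d) :
    0 ≤ exp (t • A) i j := by
  -- shifting the diagonal makes the matrix entrywise nonnegative
  set c : ℝ := ∑ k, |A k k|
  have hshift : ∀ i j, 0 ≤ (t • (A + c • 1)) i j := fun i j => by
    rcases eq_or_ne i j with rfl | hij
    · have : -A i i ≤ c := (neg_le_abs _).trans
        (Finset.single_le_sum (fun k _ => abs_nonneg (A k k)) (Finset.mem_univ i))
      simp only [smul_apply, add_apply, one_apply_eq, smul_eq_mul, mul_one]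
      exact mul_nonneg ht (by linarith)
    · simpa [one_apply_ne hij] using mul_nonneg ht (hA i j hij)
  have := exp_apply_nonneg hshift i j
  rw [NormedSpace.exp_smul_add_smul_one, smul_apply, smul_eq_mul] at this
  exact nonneg_of_mul_nonneg_right this (Real.exp_pos _)

theorem EssNonneg.isBoundedUnder_norm_exp_smul (hA : A.EssNonneg) {u : Fin d → ℝ} (hu : ∀ i, 0 < u i)
    (hAu : A *ᵥ u = 0) : IsBoundedUnder (· ≤ ·) atTop fun t : ℝ => ‖exp (t • A)‖ := by
  refine isBoundedUnder_norm_of_forall_apply_mem_Icc 0 (fun i j => u i / u j) ?_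
  filter_upwards [eventually_ge_atTop 0] with t ht i j
  have hfix : exp (t • A) *ᵥ u = u :=
    exp_mulVec_of_mulVec_eq_zero (by rw [smul_mulVec, hAu, smul_zero])
  refine ⟨hA.exp_smul_apply_nonneg ht i j, (le_div_iff₀ (hu j)).2 ?_⟩
  calc exp (t • A) i j * u j ≤ ∑ k, exp (t • A) i k * u k :=
        Finset.single_le_sum (fun k _ => mul_nonneg (hA.exp_smul_apply_nonneg ht i k) (hu k).le)
          (Finset.mem_univ j)
    _ = u i := congrFun hfix i

theorem reducible_of_apply_eq_zero (S : Finset (Fin d)) (hS : S.Nonempty) (hSc : Sᶜ.Nonempty)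
    (hA : ∀ i ∈ S, ∀ j ∉ S, A i j = 0) : A.Reducible := by
  classical
  set r := Sᶜ.card
  have hcard : r + S.card = d := by simp [r, Finset.card_compl_add_card]
  have hlow : Fintype.card {j : Fin d // (j : ℕ) < r} = Fintype.card {x : Fin d // x ∉ S} := by
    rw [Fintype.card_subtype, Fin.card_filter_val_lt, Fintype.card_subtype, Finset.filter_not]
    simp only [Finset.filter_mem_eq_inter, Finset.univ_inter, ← Finset.compl_eq_univ_sdiff]
    omega
  have hhigh :
      Fintype.card {j : Fin d // ¬ (j : ℕ) < r} = Fintype.card {x : Fin d // ¬ x ∉ S} := by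
    rw [Fintype.card_subtype_compl, Fintype.card_subtype_compl, hlow]
  -- `σ` lists the indices outside `S` first
  let σ := Equiv.subtypeCongr (Fintype.equivOfCardEq hlow) (Fintype.equivOfCardEq hhigh)
  refine ⟨σ, r, hSc.card_pos, by have := hS.card_pos; omega, fun i j hi hj => hA _ ?_ _ ?_⟩
  · have hi' : ¬ (i : ℕ) < r := not_lt.2 hi
    simpa [σ, Equiv.subtypeCongr, Equiv.sumCompl, hi'] using
      (Fintype.equivOfCardEq hhigh ⟨i, hi'⟩).2
  · simpa [σ, Equiv.subtypeCongr, Equiv.sumCompl, hj] using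
      (Fintype.equivOfCardEq hlow ⟨j, hj⟩).2

theorem EssNonneg.apply_mul_eq_zero_of_mulVec_apply_eq_zero (hA : A.EssNonneg)
    {y : Fin d → ℝ} (hy : ∀ j, 0 ≤ y j) {i : Fin d} (hyi : y i = 0) (hAy : (A *ᵥ y) i = 0)
    (j : Fin d) : A i j * y j = 0 := by
  have hterm : ∀ k ∈ Finset.univ, 0 ≤ A i k * y k := fun k _ => by
    rcases eq_or_ne i k with rfl | hik
    · rw [hyi, mul_zero]
    · exact mul_nonneg (hA i k hik) (hy k)
  exact (Finset.sum_eq_zero_iff_of_nonneg hterm).1 hAy j (Finset.mem_univ j)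

theorem Irred.eq_zero_of_mulVec_eq_smul (hA : A.EssNonneg) (hirr : A.Irred) {s : ℝ}
    {y : Fin d → ℝ} (hy : ∀ j, 0 ≤ y j) (hAy : A *ᵥ y = s • y) {i₀ : Fin d} (hi₀ : y i₀ = 0) :
    y = 0 := by
  classical
  by_contra hne
  obtain ⟨j₀, hj₀⟩ : ∃ j, y j ≠ 0 := by
    by_contra! h
    exact hne (funext h)
  refine hirr (reducible_of_apply_eq_zero {i | y i = 0} ⟨i₀, by simpa⟩ ⟨j₀, by simpa⟩
    fun i hi j hj => ?_)
  simp only [Finset.mem_filter, Finset.mem_univ, true_and] at hi hj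
  have := hA.apply_mul_eq_zero_of_mulVec_apply_eq_zero hy hi
    (by rw [hAy, Pi.smul_apply, hi, smul_zero]) j
  exact (mul_eq_zero.1 this).resolve_right hj

theorem Irred.exists_eq_smul_of_mulVec_eq_smul (hA : A.EssNonneg) (hirr : A.Irred) {s : ℝ}
    {u x : Fin d → ℝ} (hu : ∀ i, 0 < u i) (hAu : A *ᵥ u = s • u) (hAx : A *ᵥ x = s • x) :
    ∃ α : ℝ, x = α • u := by
  obtain _ | _ := isEmpty_or_nonempty (Fin d)
  · exact ⟨0, Subsingleton.elim _ _⟩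
  obtain ⟨i₀, -, hmin⟩ := Finset.univ.exists_min_image (fun i => x i / u i) Finset.univ_nonempty
  set α := x i₀ / u i₀
  refine ⟨α, sub_eq_zero.1
    (hirr.eq_zero_of_mulVec_eq_smul hA (s := s) (i₀ := i₀) (fun j => ?_) ?_ ?_)⟩
  · simpa using (le_div_iff₀ (hu j)).1 (hmin j (Finset.mem_univ j))
  · rw [mulVec_sub, mulVec_smul, hAx, hAu, smul_sub, smul_comm]
  · simp [α, div_mul_cancel₀ _ (hu i₀).ne']

end Matrix

open Matrix in
theorem cesaro_exp_tendsto_perron_projection_general {d : ℕ}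
    (A : Matrix (Fin d) (Fin d) ℝ) (hA : A.EssNonneg) (hirr : A.Irred)
    (u v : Fin d → ℝ) (hu : ∀ i, 0 < u i)
    (hAu : A.mulVec u = A.sMax • u) (hAv : A.vecMul v = A.sMax • v)
    (huv : u ⬝ᵥ v = 1) :
    Filter.Tendsto
      (fun t : ℝ =>
        (1 / t) • ∫ r in (0:ℝ)..t, Real.exp (-(A.sMax) * r) • NormedSpace.exp (r • A))
      Filter.atTop (nhds (Matrix.vecMulVec u v)) := by
  set s := A.sMax
  set B := A - s • 1
  have hBu : B *ᵥ u = 0 := by rw [sub_mulVec, hAu, smul_mulVec, one_mulVec, sub_self]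
  have hvB : v ᵥ* B = 0 := by rw [vecMul_sub, hAv, vecMul_smul, vecMul_one, sub_self]
  have hker : ∀ x, B *ᵥ x = 0 → ∃ α : ℝ, x = α • u := fun x hx =>
    hirr.exists_eq_smul_of_mulVec_eq_smul hA hu hAu
      (by rwa [sub_mulVec, smul_mulVec, one_mulVec, sub_eq_zero] at hx)
  have hexp : ∀ r : ℝ, Real.exp (-s * r) • exp (r • A) = exp (r • B) := fun r => by
    rw [← sub_add_cancel A (s • 1), exp_smul_add_smul_one, smul_smul, ← Real.exp_add, neg_mul,
      mul_comm r s, neg_add_cancel, Real.exp_zero, one_smul]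
  simp_rw [hexp]
  exact tendsto_cesaro_exp_smul (by rw [mul_vecMulVec, hBu, zero_vecMulVec])
    (mul_inv_add_vecMulVec hvB huv (isUnit_add_vecMulVec hvB huv hker))
    ((hA.sub_smul_one s).isBoundedUnder_norm_exp_smul hu hBu)

/-- For `A` essentially non-negative and irreducible with Perron projection `Π = u vᵀ`,
the Cesàro averages `(1/t) ∫₀ᵗ e^{-s(A)r} e^{rA} dr` converge to `Π` as `t → ∞`. -/
theorem cesaro_exp_tendsto_perron_projection {d : ℕ} (hd : 0 < d)
    (A : Matrix (Fin d) (Fin d) ℝ) (hA : A.EssNonneg) (hirr : A.Irred)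
    (u v : Fin d → ℝ) (hu : ∀ i, 0 < u i) (hv : ∀ i, 0 < v i)
    (hAu : A.mulVec u = A.sMax • u) (hAv : A.vecMul v = A.sMax • v)
    (huv : u ⬝ᵥ v = 1) :
    Filter.Tendsto
      (fun t : ℝ =>
        (1 / t) • ∫ r in (0:ℝ)..t, Real.exp (-(A.sMax) * r) • NormedSpace.exp (r • A))
      Filter.atTop (nhds (Matrix.vecMulVec u v)) :=
  cesaro_exp_tendsto_perron_projection_general A hA hirr u v hu hAu hAv huv
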